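/- arXiv:2406.18994 — 2 statements merged into one kernel-verified Lean document; each statement's English description precedes it below -/
import Mathlib

section
/- There exists a connected simple graph on exactly 50 vertices that is 7-regular and has diameter exactly 2; in particular it attains the Moore bound n(7,2) = 1 + 7 + 7·6 = 50 for maximum degree 7 and diameter 2 (the Hoffman–Singleton graph). -/
open scoped Classical

def hsPent (j k : Nat) : Bool := (j + 1) % 5 == k % 5 || (k + 1) % 5 == j % 5

def hsPg (j k : Nat) : Bool := (j + 2) % 5 == k % 5 || (k + 2) % 5 == j % 5

def hsF (a b : Nat) : Bool :=
  if a < 25 then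
    if b < 25 then (a / 5 == b / 5) && hsPent (a % 5) (b % 5)
    else b % 5 == ((a / 5) * ((b - 25) / 5) + a % 5) % 5
  else
    if b < 25 then a % 5 == ((b / 5) * ((a - 25) / 5) + b % 5) % 5
    else ((a - 25) / 5 == (b - 25) / 5) && hsPg (a % 5) (b % 5)

lemma hsF_symm : ∀ a b : Fin 50, hsF a.1 b.1 = hsF b.1 a.1 := by decide

lemma hsF_irrefl : ∀ a : Fin 50, ¬ hsF a.1 a.1 = true := by decide

def hsG : SimpleGraph (Fin 50) where
  Adj a b := hsF a.1 b.1 = true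
  symm := ⟨fun a b h => (hsF_symm b a).trans h⟩
  loopless := ⟨fun a h => hsF_irrefl a h⟩

instance hsGDec : DecidableRel hsG.Adj := fun a b => instDecidableEqBool _ _

set_option maxRecDepth 20000 in
lemma hsG_key : ∀ a b : Fin 50, a = b ∨ hsG.Adj a b ∨ ∃ w, hsG.Adj a w ∧ hsG.Adj w b := by
  decide

lemma hsG_edist_le (a b : Fin 50) : hsG.edist a b ≤ 2 := by
  rcases hsG_key a b with rfl | h | ⟨w, h1, h2⟩
  · simp
  · exact le_trans (hsG.edist_le h.toWalk) (by simp)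
  · exact le_trans (hsG.edist_le ((h1.toWalk).append h2.toWalk)) (by simp)

lemma hsG_ediam : hsG.ediam = 2 := by
  apply le_antisymm (SimpleGraph.ediam_le_of_edist_le hsG_edist_le)
  have h02 : (2 : ℕ∞) ≤ hsG.edist (0 : Fin 50) 2 := by
    have hne : (0 : Fin 50) ≠ 2 := by decide
    have h1 : 1 ≤ hsG.edist 0 2 := Order.one_le_iff_pos.mpr (hsG.edist_pos_of_ne hne)
    have hne1 : hsG.edist (0 : Fin 50) 2 ≠ 1 := by
      intro h
      exact (by decide : ¬ hsG.Adj 0 2) (SimpleGraph.edist_eq_one_iff_adj.mp h)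
    have h2 := Order.add_one_le_of_lt (lt_of_le_of_ne h1 (Ne.symm hne1))
    simpa [one_add_one_eq_two] using h2
  exact le_trans h02 SimpleGraph.edist_le_ediam

set_option maxRecDepth 20000 in
lemma hsG_deg : ∀ v : Fin 50, (Finset.univ.filter (hsG.Adj v)).card = 7 := by decide

/-- There exists a connected simple graph on exactly 50 vertices that is 7-regular and has
diameter exactly 2, attaining the Moore bound `n(7,2) = 1 + 7 + 7·6 = 50`
(the Hoffman–Singleton graph). -/
theorem exists_hoffman_singleton :
    ∃ G : SimpleGraph (Fin 50),
      G.Connected ∧ G.IsRegularOfDegree 7 ∧ G.diam = 2 ∧ 50 = 1 + 7 + 7 * 6 := by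
  refine ⟨hsG, ?_, ?_, ?_, rfl⟩
  · rw [SimpleGraph.connected_iff]
    refine ⟨fun a b => ?_, ⟨0⟩⟩
    have := hsG_edist_le a b
    exact hsG.reachable_of_edist_ne_top (by intro h; rw [h] at this; simp at this)
  · intro v
    rw [← hsG_deg v]
    unfold SimpleGraph.degree
    congr 1
    ext w
    simp [SimpleGraph.mem_neighborFinset]
  · rw [SimpleGraph.diam, hsG_ediam]; rfl
end

section
/- There exists a connected simple graph on exactly 200 vertices that is 16-regular, vertex-transitive, and has diameter exactly 2. -/
open scoped Classical

/-- A simple graph is vertex-transitive if for every pair of vertices there is a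
graph automorphism mapping one to the other. -/
def SimpleGraph.VertexTransitive {V : Type*} (G : SimpleGraph V) : Prop :=
  ∀ u v : V, ∃ φ : G ≃g G, φ u = v

namespace AbasGraph

set_option maxRecDepth 100000

/-- The group `(Z₁₀ × Z₁₀) ⋊ Z₂` as a plain type. -/
def Grp : Type := (ZMod 10 × ZMod 10) × ZMod 2

instance : DecidableEq Grp := inferInstanceAs (DecidableEq ((ZMod 10 × ZMod 10) × ZMod 2))
instance : Fintype Grp := inferInstanceAs (Fintype ((ZMod 10 × ZMod 10) × ZMod 2))

/-- The swap action of `Z₂`. -/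
def sw (e : ZMod 2) (p : ZMod 10 × ZMod 10) : ZMod 10 × ZMod 10 :=
  if e = 0 then p else (p.2, p.1)

lemma sw_add (e : ZMod 2) (p q : ZMod 10 × ZMod 10) : sw e (p + q) = sw e p + sw e q := by
  unfold sw; split <;> rfl

lemma sw_sw : ∀ (e f : ZMod 2) (p : ZMod 10 × ZMod 10), sw (e + f) p = sw e (sw f p) := by
  decide

lemma sw_zero (p : ZMod 10 × ZMod 10) : sw 0 p = p := rfl

lemma sw_neg (e : ZMod 2) (p : ZMod 10 × ZMod 10) : sw e (-p) = -(sw e p) := by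
  unfold sw; split <;> rfl

instance : Mul Grp := ⟨fun x y => (x.1 + sw x.2 y.1, x.2 + y.2)⟩
instance : One Grp := ⟨((0, 0), 0)⟩
instance : Inv Grp := ⟨fun x => (sw x.2 (-x.1), x.2)⟩

lemma grp_ext {x y : Grp} (h1 : x.1 = y.1) (h2 : x.2 = y.2) : x = y := by
  cases x; cases y; cases h1; cases h2; rfl

lemma z2_add_self : ∀ e : ZMod 2, e + e = 0 := by decide

instance : Group Grp where
  mul_assoc x y z := by
    apply grp_ext
    · show x.1 + sw x.2 y.1 + sw (x.2 + y.2) z.1 = x.1 + sw x.2 (y.1 + sw y.2 z.1)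
      rw [sw_add, sw_sw, add_assoc]
    · show x.2 + y.2 + z.2 = x.2 + (y.2 + z.2)
      rw [add_assoc]
  one_mul x := by
    apply grp_ext
    · show (0 : ZMod 10 × ZMod 10) + sw 0 x.1 = x.1
      rw [sw_zero, zero_add]
    · show (0 : ZMod 2) + x.2 = x.2
      rw [zero_add]
  mul_one x := by
    apply grp_ext
    · show x.1 + sw x.2 0 = x.1
      have : sw x.2 (0 : ZMod 10 × ZMod 10) = 0 := by unfold sw; split <;> rfl
      rw [this, add_zero]
    · show x.2 + 0 = x.2
      rw [add_zero]
  inv_mul_cancel x := by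
    apply grp_ext
    · show sw x.2 (-x.1) + sw x.2 x.1 = 0
      rw [sw_neg, neg_add_cancel]
    · show x.2 + x.2 = 0
      exact z2_add_self x.2
  npow := npowRec
  zpow := zpowRec

/-- The connection set (16 elements, closed under inverses, not containing 1). -/
def L : List Grp :=
  [((0, 5), 1), ((0, 9), 1), ((1, 0), 1), ((2, 4), 1), ((3, 2), 0), ((4, 1), 0),
   ((5, 0), 0), ((5, 0), 1), ((5, 2), 1), ((5, 5), 1), ((6, 2), 1), ((6, 8), 1),
   ((6, 9), 0), ((7, 8), 0), ((8, 4), 1), ((8, 5), 1)]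

lemma mem_L_inv : ∀ g ∈ L, g⁻¹ ∈ L := by decide

/-- The Cayley graph on `Grp` with connection set `L`. -/
def GG : SimpleGraph Grp where
  Adj x y := x⁻¹ * y ∈ L
  symm := by
    refine ⟨?_⟩
    intro x y h
    have h2 : (x⁻¹ * y)⁻¹ ∈ L := mem_L_inv _ h
    rwa [mul_inv_rev, inv_inv] at h2
  loopless := by
    refine ⟨?_⟩
    intro x h
    rw [inv_mul_cancel] at h
    exact absurd h (by decide)

instance : DecidableRel GG.Adj := fun x y => inferInstanceAs (Decidable (x⁻¹ * y ∈ L))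

/-- Left multiplication as a graph automorphism. -/
def leftMulIso (g : Grp) : GG ≃g GG where
  toFun x := g * x
  invFun x := g⁻¹ * x
  left_inv x := inv_mul_cancel_left g x
  right_inv x := mul_inv_cancel_left g x
  map_rel_iff' := by
    intro x y
    show (g * x)⁻¹ * (g * y) ∈ L ↔ x⁻¹ * y ∈ L
    rw [mul_inv_rev, mul_assoc, inv_mul_cancel_left]

lemma GG_transitive : GG.VertexTransitive := by
  intro u v
  exact ⟨leftMulIso (v * u⁻¹), inv_mul_cancel_right v u⟩

/-- Explicit equivalence `Grp ≃ Fin 200`. -/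
def enc (x : Grp) : Fin 200 :=
  ⟨x.2.val * 100 + x.1.1.val * 10 + x.1.2.val, by
    have h1 := x.1.1.val_lt
    have h2 := x.1.2.val_lt
    have h3 := x.2.val_lt
    omega⟩

def dec (i : Fin 200) : Grp :=
  ((((i : ℕ) / 10 % 10 : ℕ), ((i : ℕ) % 10 : ℕ)), ((i : ℕ) / 100 : ℕ))

lemma dec_enc : ∀ x : Grp, dec (enc x) = x := by decide

lemma enc_dec : ∀ i : Fin 200, enc (dec i) = i := by decide

def grpEquiv : Grp ≃ Fin 200 where
  toFun := enc
  invFun := dec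
  left_inv := dec_enc
  right_inv := enc_dec

/-- The Abas graph on `Fin 200`. -/
def G200 : SimpleGraph (Fin 200) where
  Adj i j := GG.Adj (dec i) (dec j)
  symm := ⟨fun _ _ h => GG.adj_symm h⟩
  loopless := ⟨fun _ h => GG.ne_of_adj h rfl⟩

instance : DecidableRel G200.Adj := fun i j => inferInstanceAs (Decidable (GG.Adj (dec i) (dec j)))

/-- Isomorphism between the Cayley graph and its copy on `Fin 200`. -/
def isoG : GG ≃g G200 where
  toEquiv := grpEquiv
  map_rel_iff' := by
    intro x y
    show GG.Adj (dec (enc x)) (dec (enc y)) ↔ GG.Adj x y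
    rw [dec_enc, dec_enc]

lemma G200_transitive : G200.VertexTransitive := by
  intro u v
  obtain ⟨φ, hφ⟩ := GG_transitive (dec u) (dec v)
  refine ⟨isoG.comp (φ.comp isoG.symm), ?_⟩
  show enc (φ (dec u)) = v
  rw [hφ]
  exact enc_dec v

/-- Degree computation via bijection with the connection set. -/
lemma neighborFinset_GG (v : Grp) :
    GG.neighborFinset v = L.toFinset.map ⟨fun s => v * s, mul_right_injective v⟩ := by
  ext x
  rw [SimpleGraph.mem_neighborFinset, Finset.mem_map]
  constructor
  · intro h
    exact ⟨v⁻¹ * x, List.mem_toFinset.mpr h, mul_inv_cancel_left v x⟩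
  · rintro ⟨s, hs, rfl⟩
    show v⁻¹ * (v * s) ∈ L
    rw [inv_mul_cancel_left]
    exact List.mem_toFinset.mp hs

lemma GG_degree (v : Grp) : GG.degree v = 16 := by
  rw [SimpleGraph.degree, neighborFinset_GG, Finset.card_map]
  decide

lemma G200_regular_aux : G200.IsRegularOfDegree 16 := by
  intro i
  have e : GG.neighborSet (grpEquiv.symm i) ≃ G200.neighborSet (isoG (grpEquiv.symm i)) :=
    isoG.mapNeighborSet _
  have h1 : isoG (grpEquiv.symm i) = i := grpEquiv.apply_symm_apply i
  rw [h1] at e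
  rw [← SimpleGraph.card_neighborSet_eq_degree, ← Fintype.card_congr e,
    SimpleGraph.card_neighborSet_eq_degree, GG_degree]

lemma G200_regular (inst : G200.LocallyFinite) :
    @SimpleGraph.IsRegularOfDegree _ G200 inst 16 := by
  have h : inst = fun v => SimpleGraph.neighborSetFintype G200 v :=
    funext fun v => Subsingleton.elim _ _
  rw [h]
  exact G200_regular_aux

lemma one_inv_mul (v : Grp) : (1 : Grp)⁻¹ * v = v := by rw [inv_one, one_mul]

lemma adj_one {v : Grp} (h : v ∈ L) : GG.Adj 1 v := by
  show (1 : Grp)⁻¹ * v ∈ L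
  rwa [one_inv_mul]

lemma keyP : ∀ v : Grp, v = 1 ∨ v ∈ L ∨ ∃ s ∈ L, s⁻¹ * v ∈ L := by decide

lemma edist_one_le (v : Grp) : GG.edist 1 v ≤ 2 := by
  rcases keyP v with h | h | ⟨s, hs, hsv⟩
  · subst h; simp [SimpleGraph.edist_self]
  · calc GG.edist 1 v ≤ ((SimpleGraph.Walk.cons (adj_one h) SimpleGraph.Walk.nil).length : ℕ∞) :=
        SimpleGraph.edist_le _
      _ ≤ 2 := by simp
  · have hadj : GG.Adj s v := hsv
    calc GG.edist 1 v
        ≤ ((SimpleGraph.Walk.cons (adj_one hs)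
            (SimpleGraph.Walk.cons hadj SimpleGraph.Walk.nil)).length : ℕ∞) :=
        SimpleGraph.edist_le _
      _ ≤ 2 := by simp

lemma edist_le_of_iso {V W : Type*} {G : SimpleGraph V} {G' : SimpleGraph W} (f : G ≃g G')
    (u v : V) : G'.edist (f u) (f v) ≤ G.edist u v := by
  rcases eq_or_ne (G.edist u v) ⊤ with h | h
  · rw [h]; exact le_top
  · obtain ⟨p, hp⟩ := SimpleGraph.exists_walk_of_edist_ne_top h
    rw [← hp]
    calc G'.edist (f u) (f v) ≤ ((p.map f.toHom).length : ℕ∞) := SimpleGraph.edist_le _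
      _ = (p.length : ℕ∞) := by rw [SimpleGraph.Walk.length_map]

lemma edist_iso_eq {V W : Type*} {G : SimpleGraph V} {G' : SimpleGraph W} (f : G ≃g G')
    (u v : V) : G'.edist (f u) (f v) = G.edist u v := by
  refine le_antisymm (edist_le_of_iso f u v) ?_
  have := edist_le_of_iso f.symm (f u) (f v)
  simpa using this

lemma GG_edist_le (x y : Grp) : GG.edist x y ≤ 2 := by
  calc GG.edist x y = GG.edist ((leftMulIso x⁻¹) x) ((leftMulIso x⁻¹) y) :=
      (edist_iso_eq (leftMulIso x⁻¹) x y).symm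
    _ = GG.edist 1 (x⁻¹ * y) := by
        rw [show (leftMulIso x⁻¹) x = 1 from inv_mul_cancel x,
          show (leftMulIso x⁻¹) y = x⁻¹ * y from rfl]
    _ ≤ 2 := edist_one_le _

lemma G200_edist_le (i j : Fin 200) : G200.edist i j ≤ 2 := by
  have h := edist_iso_eq isoG (grpEquiv.symm i) (grpEquiv.symm j)
  rw [show isoG (grpEquiv.symm i) = i from grpEquiv.apply_symm_apply i,
    show isoG (grpEquiv.symm j) = j from grpEquiv.apply_symm_apply j] at h
  rw [h]
  exact GG_edist_le _ _

def v0 : Grp := ((0, 1), 0)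

lemma v0_ne_one : (1 : Grp) ≠ v0 := by decide

lemma v0_not_adj : ¬ GG.Adj 1 v0 := by decide

lemma GG_edist_1v0 : GG.edist 1 v0 = 2 := by
  have h2 : GG.edist 1 v0 ≤ 2 := GG_edist_le 1 v0
  have hne : GG.edist 1 v0 ≠ ⊤ := fun h => by rw [h] at h2; exact absurd h2 (by simp)
  obtain ⟨n, hn⟩ := WithTop.ne_top_iff_exists.mp hne
  have hn0 : n ≠ 0 := by
    intro h
    subst h
    exact v0_ne_one (SimpleGraph.edist_eq_zero_iff.mp hn.symm)
  have hn1 : n ≠ 1 := by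
    intro h
    subst h
    exact v0_not_adj (SimpleGraph.edist_eq_one_iff_adj.mp hn.symm)
  have hcast : ((2 : ℕ) : ℕ∞) = 2 := rfl
  rw [← hn, ← hcast] at h2 ⊢
  have hle : n ≤ 2 := Nat.cast_le.mp h2
  have hn2 : n = 2 := by omega
  exact Nat.cast_inj.mpr hn2

lemma G200_ediam : G200.ediam = 2 := by
  refine le_antisymm (SimpleGraph.ediam_le_of_edist_le G200_edist_le) ?_
  have h := edist_iso_eq isoG 1 v0
  rw [GG_edist_1v0] at h
  rw [← h]
  exact SimpleGraph.edist_le_ediam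

lemma G200_diam : G200.diam = 2 := by
  rw [SimpleGraph.diam, G200_ediam]
  rfl

lemma G200_preconnected : G200.Preconnected := by
  intro u v
  have h := G200_edist_le u v
  exact SimpleGraph.reachable_of_edist_ne_top
    (fun ht => by rw [ht] at h; exact absurd h (by simp))

lemma G200_connected : G200.Connected := by
  rw [SimpleGraph.connected_iff]
  exact ⟨G200_preconnected, ⟨0⟩⟩

end AbasGraph

/-- There exists a connected simple graph on exactly 200 vertices that is 16-regular,
vertex-transitive, and has diameter exactly 2 (Abas). -/
theorem exists_graph_200_16_regular_diam_2 :
    ∃ G : SimpleGraph (Fin 200),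
      G.Connected ∧ G.IsRegularOfDegree 16 ∧ G.VertexTransitive ∧ G.diam = 2 := by
  set_option maxHeartbeats 1000000 in
  exact ⟨AbasGraph.G200, AbasGraph.G200_connected, AbasGraph.G200_regular _,
    AbasGraph.G200_transitive, AbasGraph.G200_diam⟩
end
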